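/- arXiv:1505.04520 — 8 statements merged into one kernel-verified Lean document; each statement's English description precedes it below -/
import Mathlib

section
/- For positive semidefinite matrices A and B and any real r ≥ 1, ‖A^r + B^r‖ ≤ ‖(A + B)^r‖, where ‖·‖ is the operator norm. -/
/-!
For `0 ≤ x` with `‖x‖ ≤ c`, the spectrum of `x` lies in `[0, c]`, where `t ^ r ≤ c ^ (r - 1) * t`;
hence `x ^ r ≤ c ^ (r - 1) • x`. Taking `c = ‖a + b‖` for both `x = a` and `x = b` gives
`a ^ r + b ^ r ≤ c ^ (r - 1) • (a + b)`, whose norm is `c ^ r = ‖(a + b) ^ r‖`. This works in any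
C⋆-algebra, and `n × n` complex matrices with the operator norm form one.
-/

open scoped ComplexOrder Matrix.Norms.L2Operator

/-- The `r`-th power of a matrix, defined via the spectral theorem (functional calculus)
when the matrix is Hermitian, and junk value `0` otherwise. -/
noncomputable def Matrix.rpow {n : ℕ} (A : Matrix (Fin n) (Fin n) ℂ) (r : ℝ) :
    Matrix (Fin n) (Fin n) ℂ :=
  if h : A.IsHermitian then h.cfc (fun x => x ^ r) else 0

open scoped MatrixOrder

theorem Real.rpow_le_rpow_sub_one_mul {t c r : ℝ} (ht : 0 ≤ t) (htc : t ≤ c) (hr : 1 ≤ r) :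
    t ^ r ≤ c ^ (r - 1) * t :=
  calc t ^ r = t ^ (r - 1) * t := by rw [← Real.rpow_add_one' ht (by linarith), sub_add_cancel]
    _ ≤ c ^ (r - 1) * t := by gcongr

namespace CFC

variable {A : Type*} [CStarAlgebra A] [PartialOrder A] [StarOrderedRing A]

theorem rpow_le_smul_of_norm_le {a : A} (ha : 0 ≤ a) {c r : ℝ} (hc : ‖a‖ ≤ c) (hr : 1 ≤ r) :
    a ^ r ≤ c ^ (r - 1) • a := by
  have hspec : ∀ t ∈ spectrum ℝ a, t ≤ c := (le_algebraMap_iff_spectrum_le (A := A)).mp <|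
    (CStarAlgebra.norm_le_iff_le_algebraMap a ((norm_nonneg a).trans hc)).mp hc
  rw [rpow_eq_cfc_real ha, ← cfc_const_mul_id _ a]
  exact cfc_mono (hf := (Real.continuous_rpow_const (by linarith)).continuousOn) fun t ht =>
    Real.rpow_le_rpow_sub_one_mul (spectrum_nonneg_of_nonneg ha ht) (hspec t ht) hr

theorem norm_rpow_add_rpow_le {a b : A} (ha : 0 ≤ a) (hb : 0 ≤ b) {r : ℝ} (hr : 1 ≤ r) :
    ‖a ^ r + b ^ r‖ ≤ ‖(a + b) ^ r‖ := by
  set c := ‖a + b‖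
  have hsum : a ^ r + b ^ r ≤ c ^ (r - 1) • (a + b) := by
    rw [smul_add]
    gcongr
    · exact rpow_le_smul_of_norm_le ha
        (CStarAlgebra.norm_le_norm_of_nonneg_of_le ha (le_add_of_nonneg_right hb)) hr
    · exact rpow_le_smul_of_norm_le hb
        (CStarAlgebra.norm_le_norm_of_nonneg_of_le hb (le_add_of_nonneg_left ha)) hr
  calc ‖a ^ r + b ^ r‖ ≤ ‖c ^ (r - 1) • (a + b)‖ :=
        CStarAlgebra.norm_le_norm_of_nonneg_of_le (add_nonneg rpow_nonneg rpow_nonneg) hsum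
    _ = c ^ (r - 1) * c := by rw [norm_smul, Real.norm_of_nonneg (by positivity)]
    _ = c ^ r := by rw [← Real.rpow_add_one' (norm_nonneg _) (by linarith), sub_add_cancel]
    _ = ‖(a + b) ^ r‖ := (norm_rpow _ (by linarith) (add_nonneg ha hb)).symm

end CFC

theorem Matrix.PosSemidef.rpow_eq_cfcRpow {n : ℕ} {A : Matrix (Fin n) (Fin n) ℂ}
    (hA : A.PosSemidef) (r : ℝ) : A.rpow r = A ^ r := by
  rw [Matrix.rpow, dif_pos hA.1, ← hA.1.cfc_eq, CFC.rpow_eq_cfc_real hA.nonneg]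

/-- For positive semidefinite matrices `A` and `B` and any real `r ≥ 1`,
`‖A^r + B^r‖ ≤ ‖(A + B)^r‖` in the operator (l2) norm. -/
theorem norm_rpow_add_rpow_le {n : ℕ} (A B : Matrix (Fin n) (Fin n) ℂ)
    (hA : A.PosSemidef) (hB : B.PosSemidef) (r : ℝ) (hr : 1 ≤ r) :
    ‖Matrix.rpow A r + Matrix.rpow B r‖ ≤ ‖Matrix.rpow (A + B) r‖ := by
  rw [hA.rpow_eq_cfcRpow, hB.rpow_eq_cfcRpow, (hA.add hB).rpow_eq_cfcRpow]
  exact CFC.norm_rpow_add_rpow_le hA.nonneg hB.nonneg hr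
end

section
/- Kantorovich inequality for positive linear maps: if Φ is a positive unital linear map and A is positive with m·I ≤ A ≤ M·I for 0 < m ≤ M, then Φ(A⁻¹) ≤ ((m+M)²/(4mM)) · Φ(A)⁻¹. -/
/-!
Write `c = m + M`. For `x ∈ [m, M]` one has `x + mM/x ≤ c`, since `(x - m)(M - x) ≥ 0`; by the
functional calculus `A + mM A⁻¹ ≤ c`, and applying the positive unital map `Φ` gives
`Φ(A) + mM Φ(A⁻¹) ≤ c`. On the other hand AM-GM, `c ≤ y + c²/(4y)` for `y > 0`, gives
`c ≤ Φ(A) + (c²/4) Φ(A)⁻¹`. Comparing the two bounds, `mM Φ(A⁻¹) ≤ (c²/4) Φ(A)⁻¹`.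
-/

section CStarAlgebra

variable {A : Type*} [CStarAlgebra A] [PartialOrder A] [StarOrderedRing A]

lemma add_smul_ringInverse_eq_cfc {a : A} (ha : IsStrictlyPositive a) (s : ℝ) :
    a + s • Ring.inverse a = cfc (fun x : ℝ ↦ x + s * x⁻¹) a := by
  have hspec : ∀ x ∈ spectrum ℝ a, x ≠ 0 := fun x hx ↦ (ha.spectrum_pos hx).ne'
  rw [cfc_add .., cfc_const_mul .., cfc_id' ℝ a, cfc_ringInverse_id a ha.isUnit]

lemma add_smul_ringInverse_le_smul_one {a : A} {m M : ℝ} (hm : 0 < m)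
    (h₁ : m • (1 : A) ≤ a) (h₂ : a ≤ M • (1 : A)) :
    a + (m * M) • Ring.inverse a ≤ (m + M) • (1 : A) := by
  have ha : IsStrictlyPositive a :=
    (IsStrictlyPositive.smul hm isStrictlyPositive_one).of_le h₁
  rw [← Algebra.algebraMap_eq_smul_one] at h₁ h₂ ⊢
  have hspec : ∀ x ∈ spectrum ℝ a, x ≠ 0 := fun x hx ↦ (ha.spectrum_pos hx).ne'
  rw [add_smul_ringInverse_eq_cfc ha, cfc_le_algebraMap_iff ..]
  intro x hx
  have hmx := (algebraMap_le_iff_le_spectrum ha.isSelfAdjoint).mp h₁ x hx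
  have hxM := (le_algebraMap_iff_spectrum_le ha.isSelfAdjoint).mp h₂ x hx
  have hx : 0 < x := hm.trans_le hmx
  have key : m + M - (x + m * M * x⁻¹) = (x - m) * (M - x) / x := by field_simp; ring
  rw [← sub_nonneg, key]
  exact div_nonneg (mul_nonneg (sub_nonneg.2 hmx) (sub_nonneg.2 hxM)) hx.le

lemma smul_one_le_add_smul_ringInverse {a : A} (ha : IsStrictlyPositive a) (c : ℝ) :
    c • (1 : A) ≤ a + (c ^ 2 / 4) • Ring.inverse a := by
  have hspec : ∀ x ∈ spectrum ℝ a, x ≠ 0 := fun x hx ↦ (ha.spectrum_pos hx).ne'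
  rw [← Algebra.algebraMap_eq_smul_one, add_smul_ringInverse_eq_cfc ha, algebraMap_le_cfc_iff ..]
  intro x hx
  have hx : 0 < x := ha.spectrum_pos hx
  have key : x + c ^ 2 / 4 * x⁻¹ - c = (2 * x - c) ^ 2 / (4 * x) := by field_simp; ring
  rw [← sub_nonneg, key]
  positivity

end CStarAlgebra

theorem kantorovich_positive_linear_map_general
    {H K : Type*} [NormedAddCommGroup H] [InnerProductSpace ℂ H] [CompleteSpace H]
    [NormedAddCommGroup K] [InnerProductSpace ℂ K] [CompleteSpace K]
    (Φ : (H →L[ℂ] H) →ₗ[ℂ] (K →L[ℂ] K))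
    (hΦ1 : Φ 1 = 1) (hΦpos : ∀ a : H →L[ℂ] H, 0 ≤ a → 0 ≤ Φ a)
    (A : H →L[ℂ] H) (hinv : Invertible A)
    (m M : ℝ) (hm : 0 < m) (hmM : m ≤ M)
    (h1 : m • (1 : H →L[ℂ] H) ≤ A) (h2 : A ≤ M • (1 : H →L[ℂ] H)) :
    Φ hinv.invOf ≤ ((m + M) ^ 2 / (4 * m * M)) • Ring.inverse (Φ A) := by
  have hmM_pos : 0 < m * M := mul_pos hm (hm.trans_le hmM)
  have hΦmono : Monotone Φ := (PositiveLinearMap.mk₀ Φ hΦpos).monotone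
  have hΦsmul_one (r : ℝ) : Φ (r • 1) = r • 1 := by rw [LinearMap.map_smul_of_tower, hΦ1]
  have hΦA : IsStrictlyPositive (Φ A) :=
    (IsStrictlyPositive.smul hm isStrictlyPositive_one).of_le (hΦsmul_one m ▸ hΦmono h1)
  have upper : Φ A + (m * M) • Φ hinv.invOf ≤ (m + M) • 1 := by
    simpa only [Ring.inverse_invertible, map_add, LinearMap.map_smul_of_tower, hΦsmul_one]
      using hΦmono (add_smul_ringInverse_le_smul_one hm h1 h2)
  have lower := smul_one_le_add_smul_ringInverse hΦA (m + M)
  have key : (m * M) • Φ hinv.invOf ≤ ((m + M) ^ 2 / 4) • Ring.inverse (Φ A) :=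
    le_of_add_le_add_left (upper.trans lower)
  calc Φ hinv.invOf = (m * M)⁻¹ • ((m * M) • Φ hinv.invOf) := by
        rw [inv_smul_smul₀ hmM_pos.ne']
    _ ≤ (m * M)⁻¹ • (((m + M) ^ 2 / 4) • Ring.inverse (Φ A)) :=
        smul_le_smul_of_nonneg_left key (inv_nonneg.2 hmM_pos.le)
    _ = ((m + M) ^ 2 / (4 * m * M)) • Ring.inverse (Φ A) := by
        rw [smul_smul]; congr 1; field_simp

/-- Kantorovich inequality for positive unital linear maps: if `Φ` is positive and unital
and `m • 1 ≤ A ≤ M • 1` with `0 < m ≤ M`, then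
`Φ(A⁻¹) ≤ ((m+M)²/(4mM)) • Φ(A)⁻¹`. -/
theorem kantorovich_positive_linear_map
    {H K : Type*} [NormedAddCommGroup H] [InnerProductSpace ℂ H] [CompleteSpace H]
    [NormedAddCommGroup K] [InnerProductSpace ℂ K] [CompleteSpace K]
    (Φ : (H →L[ℂ] H) →ₗ[ℂ] (K →L[ℂ] K))
    (hΦ1 : Φ 1 = 1) (hΦpos : ∀ a : H →L[ℂ] H, 0 ≤ a → 0 ≤ Φ a)
    (A : H →L[ℂ] H) (hA : 0 ≤ A) (hinv : Invertible A)
    (m M : ℝ) (hm : 0 < m) (hmM : m ≤ M)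
    (h1 : m • (1 : H →L[ℂ] H) ≤ A) (h2 : A ≤ M • (1 : H →L[ℂ] H)) :
    Φ hinv.invOf ≤ ((m + M) ^ 2 / (4 * m * M)) • Ring.inverse (Φ A) :=
  kantorovich_positive_linear_map_general Φ hΦ1 hΦpos A hinv m M hm hmM h1 h2
end

section
/- If A is an n×n positive definite matrix with m·I ≤ A ≤ M·I for 0 < m ≤ M, then tr(A⁻¹) ≤ (n²(m+M)²/(4mM)) · (tr A)⁻¹. -/
open scoped ComplexOrder MatrixOrder

/-! Since `m ≤ A ≤ M`, the operator `(A - m)(M - A)A⁻¹ = (m + M) - A - mM A⁻¹` is positive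
semidefinite (functional calculus of `x ↦ (x - m)(M - x)/x ≥ 0` on `[m, M]`). Taking traces gives
`mM tr A⁻¹ ≤ n(m + M) - tr A`, and AM-GM, `(n(m + M) - tr A) tr A ≤ n²(m + M)²/4`, finishes. -/

lemma mul_inv_le_add_sub_of_mem_Icc {m M x : ℝ} (hm : 0 < m) (hx : x ∈ Set.Icc m M) :
    m * M * x⁻¹ ≤ m + M - x := by
  obtain ⟨hmx, hxM⟩ := hx
  rw [← div_eq_mul_inv, div_le_iff₀ (hm.trans_le hmx)]
  nlinarith [mul_nonneg (sub_nonneg.2 hmx) (sub_nonneg.2 hxM)]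

lemma le_sq_div_four_mul_inv_of_mul_le_sub {k c s t : ℝ} (hk : 0 < k) (hs : 0 < s)
    (h : k * t ≤ c - s) : t ≤ c ^ 2 / (4 * k) * s⁻¹ := by
  rw [← div_eq_mul_inv, div_div, le_div_iff₀ (by positivity)]
  nlinarith [sq_nonneg (c - 2 * s), mul_le_mul_of_nonneg_left h hs.le]

section CFC

variable {A : Type*} [Ring A] [StarRing A] [PartialOrder A] [StarOrderedRing A] [Algebra ℝ A]
  [TopologicalSpace A] [ContinuousFunctionalCalculus ℝ A IsSelfAdjoint]

lemma spectrum_subset_Icc_of_le_of_le [NonnegSpectrumClass ℝ A] {a : A} (ha : IsSelfAdjoint a)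
    {m M : ℝ} (hma : algebraMap ℝ A m ≤ a) (haM : a ≤ algebraMap ℝ A M) :
    spectrum ℝ a ⊆ Set.Icc m M :=
  fun x hx ↦ ⟨(algebraMap_le_iff_le_spectrum ha).1 hma x hx,
    (le_algebraMap_iff_spectrum_le ha).1 haM x hx⟩

lemma smul_inv_le_algebraMap_sub {a : Aˣ} (ha : IsSelfAdjoint (a : A)) {m M : ℝ} (hm : 0 < m)
    (hspec : spectrum ℝ (a : A) ⊆ Set.Icc m M) :
    (m * M) • (↑a⁻¹ : A) ≤ algebraMap ℝ A (m + M) - a := by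
  have hsub : algebraMap ℝ A (m + M) - a = cfc (fun x ↦ m + M - x) (a : A) := by
    rw [cfc_sub .., cfc_const .., cfc_id' ..]
  rw [← cfc_inv_id (R := ℝ) a, ← cfc_smul .., hsub]
  exact cfc_mono fun x hx ↦ mul_inv_le_add_sub_of_mem_Icc hm (hspec hx)

end CFC

namespace Matrix

variable {𝕜 ι : Type*} [RCLike 𝕜] [Fintype ι] [DecidableEq ι]

lemma PosDef.mul_re_trace_inv_le {A : Matrix ι ι 𝕜} (hA : A.PosDef) {m M : ℝ} (hm : 0 < m)
    (hmA : (A - m • (1 : Matrix ι ι 𝕜)).PosSemidef)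
    (hAM : (M • (1 : Matrix ι ι 𝕜) - A).PosSemidef) :
    m * M * RCLike.re A⁻¹.trace ≤ Fintype.card ι * (m + M) - RCLike.re A.trace := by
  have hsa : IsSelfAdjoint A := hA.isHermitian.isSelfAdjoint
  have hspec : spectrum ℝ A ⊆ Set.Icc m M := by
    refine spectrum_subset_Icc_of_le_of_le hsa ?_ ?_ <;>
      rwa [le_iff, Algebra.algebraMap_eq_smul_one]
  have hle := smul_inv_le_algebraMap_sub (a := hA.isUnit.unit) hsa hm hspec
  rw [coe_units_inv, IsUnit.unit_spec] at hle
  have htrace := (RCLike.nonneg_iff.1 (le_iff.1 hle).trace_nonneg).1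
  simp only [Algebra.algebraMap_eq_smul_one, trace_sub, trace_smul, trace_one, map_sub,
    RCLike.smul_re, RCLike.natCast_re, sub_nonneg] at htrace
  linarith

end Matrix

/-- If `A` is an `n × n` positive definite matrix with `m • 1 ≤ A ≤ M • 1` for
`0 < m ≤ M`, then `tr(A⁻¹) ≤ (n² (m+M)² / (4 m M)) · (tr A)⁻¹`. -/
theorem trace_inv_le_kantorovich {n : ℕ} (A : Matrix (Fin n) (Fin n) ℂ) (hA : A.PosDef)
    (m M : ℝ) (hm : 0 < m) (hmM : m ≤ M)
    (h1 : (A - m • (1 : Matrix (Fin n) (Fin n) ℂ)).PosSemidef)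
    (h2 : ((M • (1 : Matrix (Fin n) (Fin n) ℂ)) - A).PosSemidef) :
    A⁻¹.trace.re ≤ ((n : ℝ) ^ 2 * (m + M) ^ 2 / (4 * m * M)) * (A.trace.re)⁻¹ := by
  obtain _ | _ := isEmpty_or_nonempty (Fin n)
  · simp [Matrix.trace]
  have htrace : 0 < A.trace.re := (RCLike.pos_iff.1 hA.trace_pos).1
  simpa [mul_pow, mul_assoc] using le_sq_div_four_mul_inv_of_mul_le_sub
    (mul_pos hm (hm.trans_le hmM)) htrace (hA.mul_re_trace_inv_le hm h1 h2)
end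

section
/- For positive definite matrices A and B and t ∈ [0,1], the trace of the weighted geometric mean satisfies tr(A #_t B) ≤ (tr A)^{1−t} (tr B)^t. -/
open scoped ComplexOrder

/-- The `t`-weighted geometric mean `A #_t B = A^{1/2} (A^{-1/2} B A^{-1/2})^t A^{1/2}`. -/
noncomputable def Matrix.geomMean {n : ℕ} (A B : Matrix (Fin n) (Fin n) ℂ) (t : ℝ) :
    Matrix (Fin n) (Fin n) ℂ :=
  A.rpow (1 / 2) * (Matrix.rpow (A.rpow (-(1 / 2)) * B * A.rpow (-(1 / 2))) t) * A.rpow (1 / 2)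

/-! With `C = A^{-1/2} B A^{-1/2} = U diag(μ) U*`, cyclicity of the trace gives
`tr(A #_t B) = tr(C^t A) = ∑ wᵢ μᵢ^t`, `tr A = ∑ wᵢ` and `tr B = tr(C A) = ∑ wᵢ μᵢ` with the
nonnegative weights `wᵢ = (U* A U)ᵢᵢ`. The claim is then Hölder's inequality for the weights `w`
with exponents `1/(1-t)` and `1/t`. -/

lemma Real.sum_mul_rpow_le_of_nonneg {ι : Type*} (s : Finset ι) {w μ : ι → ℝ}
    (hw : ∀ i, 0 ≤ w i) (hμ : ∀ i, 0 ≤ μ i) {t : ℝ} (ht0 : 0 ≤ t) (ht1 : t ≤ 1) :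
    ∑ i ∈ s, w i * μ i ^ t ≤ (∑ i ∈ s, w i) ^ (1 - t) * (∑ i ∈ s, w i * μ i) ^ t := by
  obtain rfl | ht0 := ht0.eq_or_lt
  · simp
  have h := Real.inner_le_weight_mul_Lp_of_nonneg s (one_le_inv₀ ht0 |>.mpr ht1) w (μ · ^ t) hw
    fun i => Real.rpow_nonneg (hμ i) t
  simpa only [Real.rpow_rpow_inv (hμ _) ht0.ne', inv_inv] using h

namespace Matrix

section

variable {m : Type*} [Fintype m] [DecidableEq m] {C : Matrix m m ℂ}

lemma IsHermitian.trace_cfc_mul (hC : C.IsHermitian) (f : ℝ → ℝ) (X : Matrix m m ℂ) :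
    (hC.cfc f * X).trace = ∑ i, f (hC.eigenvalues i) *
      (star (hC.eigenvectorUnitary : Matrix m m ℂ) * X * hC.eigenvectorUnitary) i i := by
  rw [IsHermitian.cfc, Unitary.conjStarAlgAut_apply, trace_mul_cycle, ← mul_assoc,
    trace_mul_cycle, trace_mul_comm]
  simp [trace, diagonal_mul, mul_assoc]

end

variable {n : ℕ} {A : Matrix (Fin n) (Fin n) ℂ}

lemma isHermitian_rpow (M : Matrix (Fin n) (Fin n) ℂ) (r : ℝ) : (M.rpow r).IsHermitian := by
  unfold rpow
  split_ifs with hM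
  · rw [← hM.cfc_eq, isHermitian_iff_isSelfAdjoint]
    exact cfc_predicate _ M
  · exact isHermitian_zero

lemma IsHermitian.rpow_eq_cfc (hA : A.IsHermitian) (r : ℝ) :
    A.rpow r = cfc (fun x : ℝ => x ^ r) A := by
  rw [rpow, dif_pos hA, hA.cfc_eq]

lemma IsHermitian.rpow_zero (hA : A.IsHermitian) : A.rpow 0 = 1 := by
  simpa [hA.rpow_eq_cfc] using cfc_const_one ℝ A hA.isSelfAdjoint

lemma IsHermitian.rpow_one (hA : A.IsHermitian) : A.rpow 1 = A := by
  simpa [hA.rpow_eq_cfc] using cfc_id' ℝ A hA.isSelfAdjoint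

lemma PosDef.rpow_add (hA : A.PosDef) (r s : ℝ) : A.rpow (r + s) = A.rpow r * A.rpow s := by
  rw [hA.1.rpow_eq_cfc, hA.1.rpow_eq_cfc, hA.1.rpow_eq_cfc,
    ← cfc_mul _ _ _ (A.finite_real_spectrum.continuousOn _)
      (A.finite_real_spectrum.continuousOn _)]
  refine cfc_congr fun x hx => Real.rpow_add ?_ r s
  rw [hA.1.spectrum_real_eq_range_eigenvalues] at hx
  obtain ⟨i, rfl⟩ := hx
  exact hA.eigenvalues_pos i

theorem PosSemidef.re_trace_rpow_mul_le {C : Matrix (Fin n) (Fin n) ℂ} (hC : C.PosSemidef)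
    (hA : A.PosSemidef) {t : ℝ} (ht0 : 0 ≤ t) (ht1 : t ≤ 1) :
    (C.rpow t * A).trace.re ≤ A.trace.re ^ (1 - t) * (C * A).trace.re ^ t := by
  set U : Matrix (Fin n) (Fin n) ℂ := ↑hC.1.eigenvectorUnitary
  set w : Fin n → ℝ := fun i => (star U * A * U) i i |>.re
  have hw : ∀ i, 0 ≤ w i := fun i => Complex.nonneg_iff.mp
    ((star_eq_conjTranspose U ▸ hA.conjTranspose_mul_mul_same U).diag_nonneg) |>.1
  have htrace : ∀ f : ℝ → ℝ,
      (hC.1.cfc f * A).trace.re = ∑ i, w i * f (hC.1.eigenvalues i) := by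
    intro f
    rw [hC.1.trace_cfc_mul, Complex.re_sum]
    exact Finset.sum_congr rfl fun i _ => by rw [Complex.re_ofReal_mul, mul_comm]
  have hone : hC.1.cfc (fun _ => 1) = 1 := by
    rw [← hC.1.cfc_eq, cfc_const_one ℝ C hC.1.isSelfAdjoint]
  have hid : hC.1.cfc id = C := by
    rw [← hC.1.cfc_eq, cfc_id ℝ C hC.1.isSelfAdjoint]
  have htrA : A.trace.re = ∑ i, w i := by simpa [hone] using htrace fun _ => 1
  have htrCA : (C * A).trace.re = ∑ i, w i * hC.1.eigenvalues i := by
    simpa [hid] using htrace id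
  rw [rpow, dif_pos hC.1, htrace, htrA, htrCA]
  exact Real.sum_mul_rpow_le_of_nonneg Finset.univ hw hC.eigenvalues_nonneg ht0 ht1

end Matrix

/-- For positive definite matrices `A`, `B` and `t ∈ [0,1]`,
`tr(A #_t B) ≤ (tr A)^{1-t} (tr B)^t`. -/
theorem trace_geomMean_le {n : ℕ} (A B : Matrix (Fin n) (Fin n) ℂ)
    (hA : A.PosDef) (hB : B.PosDef) (t : ℝ) (ht0 : 0 ≤ t) (ht1 : t ≤ 1) :
    (Matrix.geomMean A B t).trace.re ≤ A.trace.re ^ (1 - t) * B.trace.re ^ t := by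
  set S := A.rpow (1 / 2)
  set T := A.rpow (-(1 / 2))
  set C := T * B * T
  have hSS : S * S = A := by rw [← hA.rpow_add, add_halves, hA.1.rpow_one]
  have hTAT : T * A * T = 1 := by
    conv_lhs => rw [← hA.1.rpow_one]
    rw [← hA.rpow_add, ← hA.rpow_add]
    norm_num [hA.1.rpow_zero]
  have hC : C.PosSemidef := by
    have h := hB.posSemidef.mul_mul_conjTranspose_same T
    rwa [(Matrix.isHermitian_rpow A _).eq] at h
  have hgeom : (Matrix.geomMean A B t).trace = (C.rpow t * A).trace := by
    rw [Matrix.geomMean, Matrix.trace_mul_cycle, hSS, Matrix.trace_mul_comm]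
  have hCA : (C * A).trace = B.trace := by
    rw [Matrix.trace_mul_cycle, ← mul_assoc, Matrix.trace_mul_cycle, ← mul_assoc, hTAT, one_mul]
  rw [hgeom, ← hCA]
  exact hC.re_trace_rpow_mul_le hA.posSemidef ht0 ht1
end

section
/- For 0 < m ≤ M with h = M/m, the Specht ratio and the Kantorovich constant satisfy S(h) ≤ (m+M)²/(4mM) ≤ S(h)², where S(h) = (h−1)h^{1/(h−1)}/(e log h) for h ≠ 1 and S(1) = 1. -/
/-- The Specht ratio `S(h) = (h-1) h^{1/(h-1)} / (e log h)` for `h ≠ 1`, with `S(1) = 1`. -/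
noncomputable def specht (h : ℝ) : ℝ :=
  if h = 1 then 1 else (h - 1) * h ^ (1 / (h - 1)) / (Real.exp 1 * Real.log h)

/-!
Write `u = log h / (h - 1) ∈ (0, 1]` for `h > 1`, so that `S(h) = e^(u-1) / u`. The lower bound
follows from `e^(u-1) (2 - u) ≤ 1` together with `u ≥ 2 / (h + 1)`, the inequality between the
logarithmic and the arithmetic mean, which makes `u (2 - u) ≥ 4h / (1 + h)²` as `u (2 - u)`
increases on `[0, 1]`. The upper bound
is the square of `(1 + h) u ≤ 2 √h e^(u-1)`: since `log h = u (h - 1)`, the left side equals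
`log h + 2u`, and `x + 1 ≤ e^x` at `x = log h / 2 + u - 1` gives it.
-/

open Real

noncomputable def kantorovich (h : ℝ) : ℝ := (1 + h) ^ 2 / (4 * h)

lemma kantorovich_div {m M : ℝ} (hm : 0 < m) (hM : 0 < M) :
    kantorovich (M / m) = (m + M) ^ 2 / (4 * m * M) := by
  unfold kantorovich
  field_simp

lemma two_mul_sub_one_div_add_one_le_log {x : ℝ} (hx : 1 ≤ x) :
    2 * (x - 1) / (x + 1) ≤ log x := by
  have hsum := hasSum_log_one_add (sub_nonneg.2 hx)
  rw [add_sub_cancel, sub_add_eq_add_sub, show x + 2 - 1 = x + 1 by ring] at hsum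
  simpa [mul_div_assoc] using le_hasSum hsum 0 fun k _ => by positivity

lemma specht_eq_exp_div {h : ℝ} (hh : 1 < h) :
    specht h = exp (log h / (h - 1) - 1) / (log h / (h - 1)) := by
  have hlog : log h ≠ 0 := (log_pos hh).ne'
  have hsub : h - 1 ≠ 0 := (sub_pos.2 hh).ne'
  rw [specht, if_neg hh.ne', rpow_def_of_pos (by linarith), exp_sub]
  field_simp

lemma exp_sub_one_mul_two_sub_le_one (u : ℝ) : exp (u - 1) * (2 - u) ≤ 1 := by
  calc exp (u - 1) * (2 - u) ≤ exp (u - 1) * exp (1 - u) := by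
        gcongr
        linarith [add_one_le_exp (1 - u)]
    _ = 1 := by rw [← exp_add]; simp

lemma exp_sub_one_div_le_kantorovich {h u : ℝ} (hh : 0 < h) (hu : 2 / (h + 1) ≤ u)
    (hu₁ : u ≤ 1) : exp (u - 1) / u ≤ kantorovich h := by
  have hv : 0 < 2 / (h + 1) := by positivity
  have hu₀ : 0 < u := hv.trans_le hu
  have hquad : 4 * h ≤ (1 + h) ^ 2 * (u * (2 - u)) := by
    have hval : (1 + h) ^ 2 * (2 / (h + 1) * (2 - 2 / (h + 1))) = 4 * h := by field_simp; ring
    have hmono : 2 / (h + 1) * (2 - 2 / (h + 1)) ≤ u * (2 - u) := by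
      nlinarith [mul_nonneg (sub_nonneg.2 hu) (by linarith : 0 ≤ 2 - u - 2 / (h + 1))]
    rw [← hval]
    gcongr
  rw [kantorovich, div_le_div_iff₀ hu₀ (by positivity)]
  calc exp (u - 1) * (4 * h) ≤ exp (u - 1) * ((1 + h) ^ 2 * (u * (2 - u))) := by gcongr
    _ = (1 + h) ^ 2 * u * (exp (u - 1) * (2 - u)) := by ring
    _ ≤ (1 + h) ^ 2 * u :=
        mul_le_of_le_one_right (by positivity) (exp_sub_one_mul_two_sub_le_one u)

lemma kantorovich_le_exp_sub_one_div_sq {h u : ℝ} (hh : 0 < h) (hu : 0 < u)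
    (hlog : u * (h - 1) = log h) : kantorovich h ≤ (exp (u - 1) / u) ^ 2 := by
  have hroot : exp (log h / 2) ^ 2 = h := by rw [exp_half, exp_log hh, sq_sqrt hh.le]
  have hlin : (1 + h) * u ≤ 2 * exp (log h / 2) * exp (u - 1) := by
    rw [mul_assoc, ← exp_add]
    linarith [add_one_le_exp (log h / 2 + (u - 1))]
  rw [kantorovich, div_pow, div_le_div_iff₀ (by positivity) (by positivity)]
  calc (1 + h) ^ 2 * u ^ 2 = ((1 + h) * u) ^ 2 := by ring
    _ ≤ (2 * exp (log h / 2) * exp (u - 1)) ^ 2 := by gcongr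
    _ = exp (u - 1) ^ 2 * (4 * h) := by linear_combination 4 * exp (u - 1) ^ 2 * hroot

lemma two_div_add_one_le_log_div_sub_one {h : ℝ} (hh : 1 < h) :
    2 / (h + 1) ≤ log h / (h - 1) := by
  have hlog := two_mul_sub_one_div_add_one_le_log hh.le
  rw [div_le_iff₀ (by linarith)] at hlog
  rw [div_le_div_iff₀ (by linarith) (by linarith)]
  linarith

lemma specht_le_kantorovich {h : ℝ} (hh : 1 < h) : specht h ≤ kantorovich h := by
  rw [specht_eq_exp_div hh]
  exact exp_sub_one_div_le_kantorovich (by linarith) (two_div_add_one_le_log_div_sub_one hh)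
    ((div_le_one (by linarith)).2 (log_le_sub_one_of_pos (by linarith)))

lemma kantorovich_le_specht_sq {h : ℝ} (hh : 1 < h) : kantorovich h ≤ specht h ^ 2 := by
  have hsub : h - 1 ≠ 0 := by linarith
  rw [specht_eq_exp_div hh]
  exact kantorovich_le_exp_sub_one_div_sq (by linarith)
    (div_pos (log_pos hh) (by linarith)) (div_mul_cancel₀ _ hsub)

/-- For `0 < m ≤ M` with `h = M/m`, the Specht ratio and the Kantorovich constant
satisfy `S(h) ≤ (m+M)²/(4mM) ≤ S(h)²`. -/
theorem specht_le_kantorovich_le_specht_sq (m M : ℝ) (hm : 0 < m) (hmM : m ≤ M) :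
    specht (M / m) ≤ (m + M) ^ 2 / (4 * m * M) ∧
      (m + M) ^ 2 / (4 * m * M) ≤ specht (M / m) ^ 2 := by
  rw [← kantorovich_div hm (hm.trans_le hmM)]
  obtain rfl | hlt := hmM.eq_or_lt
  · rw [div_self hm.ne']
    norm_num [specht, kantorovich]
  · have hh : 1 < M / m := (one_lt_div hm).2 hlt
    exact ⟨specht_le_kantorovich hh, kantorovich_le_specht_sq hh⟩
end

section
/- Let Φ be a positive unital linear map and let A₁, …, Aₙ be positive invertible operators with m·I ≤ Aᵢ ≤ M·I for 0 < m < M, and (w₁,…,wₙ) a probability weight vector. Then Σᵢ wᵢ Φ(Aᵢ) ≤ ((m+M)²/(4mM)) · Φ((Σᵢ wᵢ Aᵢ⁻¹)⁻¹). -/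
set_option maxHeartbeats 1000000
set_option synthInstance.maxHeartbeats 200000

section KantorovichAux

variable {H : Type*} [NormedAddCommGroup H] [InnerProductSpace ℂ H] [CompleteSpace H]

private lemma kanto_smul_nonneg {w : ℝ} (hw : 0 ≤ w) {c : H →L[ℂ] H} (hc : 0 ≤ c) :
    0 ≤ w • c := by
  have h := star_left_conjugate_nonneg hc ((Real.sqrt w) • (1 : H →L[ℂ] H))
  have e : star ((Real.sqrt w) • (1 : H →L[ℂ] H)) * c * ((Real.sqrt w) • (1 : H →L[ℂ] H))
      = w • c := by
    rw [star_smul, star_one, star_trivial, smul_mul_assoc, one_mul, mul_smul_comm, mul_one,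
      smul_smul, Real.mul_self_sqrt hw]
  rwa [e] at h

private lemma kanto_smul_mono {w : ℝ} (hw : 0 ≤ w) {a b : H →L[ℂ] H} (hab : a ≤ b) :
    w • a ≤ w • b := by
  have := kanto_smul_nonneg hw (sub_nonneg.mpr hab)
  rw [smul_sub] at this
  exact sub_nonneg.mp this

private lemma kanto_spectrum_subset {a : H →L[ℂ] H} {m M : ℝ}
    (ha : 0 ≤ a) (hle : m • (1 : H →L[ℂ] H) ≤ a) (hge : a ≤ M • (1 : H →L[ℂ] H)) :
    spectrum ℝ a ⊆ Set.Icc m M := by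
  have hsa : IsSelfAdjoint a := .of_nonneg ha
  intro x hx
  refine ⟨(algebraMap_le_iff_le_spectrum hsa).mp ?_ x hx,
    (le_algebraMap_iff_spectrum_le hsa).mp ?_ x hx⟩
  · rwa [Algebra.algebraMap_eq_smul_one]
  · rwa [Algebra.algebraMap_eq_smul_one]

private lemma kanto_inverse_eq_cfc {a : H →L[ℂ] H} (hsa : IsSelfAdjoint a)
    (h0 : ∀ x ∈ spectrum ℝ a, x ≠ 0) :
    Ring.inverse a = cfc (fun x : ℝ => x⁻¹) a := by
  have h := cfc_inv (R := ℝ) (id : ℝ → ℝ) a h0 continuousOn_id hsa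
  rw [cfc_id ℝ a hsa] at h
  exact h.symm

end KantorovichAux

/-- For a positive unital linear map `Φ`, positive invertible operators `A₁, …, Aₙ` with
`m • 1 ≤ Aᵢ ≤ M • 1`, `0 < m < M`, and a probability weight vector `w`, one has
`Σ wᵢ Φ(Aᵢ) ≤ ((m+M)²/(4mM)) • Φ((Σ wᵢ Aᵢ⁻¹)⁻¹)`. -/
theorem weighted_arithmetic_le_kantorovich_harmonic
    {H K : Type*} [NormedAddCommGroup H] [InnerProductSpace ℂ H] [CompleteSpace H]
    [NormedAddCommGroup K] [InnerProductSpace ℂ K] [CompleteSpace K]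
    (Φ : (H →L[ℂ] H) →ₗ[ℂ] (K →L[ℂ] K))
    (hΦ1 : Φ 1 = 1) (hΦpos : ∀ a : H →L[ℂ] H, 0 ≤ a → 0 ≤ Φ a)
    (n : ℕ) (A : Fin n → H →L[ℂ] H) (w : Fin n → ℝ)
    (hw : ∀ i, 0 ≤ w i) (hw1 : ∑ i, w i = 1)
    (hpos : ∀ i, 0 ≤ A i) (hinv : ∀ i, Invertible (A i))
    (m M : ℝ) (hm : 0 < m) (hmM : m < M)
    (h1 : ∀ i, m • (1 : H →L[ℂ] H) ≤ A i) (h2 : ∀ i, A i ≤ M • (1 : H →L[ℂ] H)) :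
    ∑ i, w i • Φ (A i)
      ≤ ((m + M) ^ 2 / (4 * m * M)) • Φ (Ring.inverse (∑ i, w i • (hinv i).invOf)) := by
  have hM : 0 < M := hm.trans hmM
  set k : ℝ := (m + M) ^ 2 / (4 * m * M) with hk
  -- basic facts about each A i
  have hsa : ∀ i, IsSelfAdjoint (A i) := fun i => .of_nonneg (hpos i)
  have hspec : ∀ i, spectrum ℝ (A i) ⊆ Set.Icc m M :=
    fun i => kanto_spectrum_subset (hpos i) (h1 i) (h2 i)
  have h0 : ∀ i, ∀ x ∈ spectrum ℝ (A i), x ≠ 0 :=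
    fun i x hx => (hm.trans_le (hspec i hx).1).ne'
  have hcont : ∀ i, ContinuousOn (fun x : ℝ => x⁻¹) (spectrum ℝ (A i)) :=
    fun i => continuousOn_id.inv₀ (h0 i)
  have hinv_eq : ∀ i, Ring.inverse (A i) = cfc (fun x : ℝ => x⁻¹) (A i) :=
    fun i => kanto_inverse_eq_cfc (hsa i) (h0 i)
  have hinvOf_eq : ∀ i, (hinv i).invOf = Ring.inverse (A i) := by
    intro i
    letI := hinv i
    exact (Ring.inverse_invertible (A i)).symm
  -- lower bound for each inverse
  have hinv_lb : ∀ i, (1 / M) • (1 : H →L[ℂ] H) ≤ Ring.inverse (A i) := by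
    intro i
    rw [hinv_eq i, ← Algebra.algebraMap_eq_smul_one]
    refine (algebraMap_le_cfc_iff _ _ _ (hcont i) (hsa i)).mpr fun x hx => ?_
    obtain ⟨hx1, hx2⟩ := hspec i hx
    have hx0 : 0 < x := hm.trans_le hx1
    rw [← one_div]
    exact one_div_le_one_div_of_le hx0 hx2
  -- key inequality for each A i : A i + m*M • (A i)⁻¹ ≤ (m+M) • 1
  have key1 : ∀ i, A i ≤ (m + M) • (1 : H →L[ℂ] H) - (m * M) • Ring.inverse (A i) := by
    intro i
    rw [le_sub_iff_add_le]
    have e : A i + (m * M) • Ring.inverse (A i)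
        = cfc (fun x : ℝ => x + (m * M) * x⁻¹) (A i) := by
      rw [cfc_add (A i) (fun x : ℝ => x) (fun x : ℝ => (m * M) * x⁻¹) continuousOn_id
          (continuousOn_const.mul (hcont i)),
        cfc_id' ℝ (A i) (hsa i), cfc_const_mul _ _ _ (hcont i), hinv_eq i]
    rw [e, ← Algebra.algebraMap_eq_smul_one]
    refine (cfc_le_algebraMap_iff _ _ _ ?_ (hsa i)).mpr fun x hx => ?_
    · exact continuousOn_id.add (continuousOn_const.mul (hcont i))
    · obtain ⟨hx1, hx2⟩ := hspec i hx
      have hx0 : 0 < x := hm.trans_le hx1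
      have h3 : m * M * x⁻¹ ≤ (m + M) - x := by
        rw [show m * M * x⁻¹ = (m * M) / x from (div_eq_mul_inv _ _).symm, div_le_iff₀ hx0]
        nlinarith [mul_nonneg (sub_nonneg.mpr hx1) (sub_nonneg.mpr hx2)]
      linarith
  -- the harmonic mean candidate
  set B : H →L[ℂ] H := ∑ i, w i • (hinv i).invOf with hB
  have hBeq : B = ∑ i, w i • Ring.inverse (A i) := by
    rw [hB]
    exact Finset.sum_congr rfl fun i _ => by rw [hinvOf_eq i]
  have hBlb : (1 / M) • (1 : H →L[ℂ] H) ≤ B := by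
    calc (1 / M) • (1 : H →L[ℂ] H) = ∑ i, w i • ((1 / M) • (1 : H →L[ℂ] H)) := by
          rw [← Finset.sum_smul, hw1, one_smul]
      _ ≤ ∑ i, w i • Ring.inverse (A i) :=
          Finset.sum_le_sum fun i _ => kanto_smul_mono (hw i) (hinv_lb i)
      _ = B := hBeq.symm
  have hone : (0 : H →L[ℂ] H) ≤ 1 := by simpa using star_mul_self_nonneg (1 : H →L[ℂ] H)
  have hBpos : (0 : H →L[ℂ] H) ≤ B :=
    le_trans (kanto_smul_nonneg (by positivity) hone) hBlb
  have hBsa : IsSelfAdjoint B := .of_nonneg hBpos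
  have hBspec : ∀ x ∈ spectrum ℝ B, 1 / M ≤ x := by
    refine (algebraMap_le_iff_le_spectrum hBsa).mp ?_
    rwa [Algebra.algebraMap_eq_smul_one]
  have hB0 : ∀ x ∈ spectrum ℝ B, x ≠ 0 :=
    fun x hx => ((by positivity : (0:ℝ) < 1 / M).trans_le (hBspec x hx)).ne'
  have hBcont : ContinuousOn (fun x : ℝ => x⁻¹) (spectrum ℝ B) :=
    continuousOn_id.inv₀ hB0
  have hBinv_eq : Ring.inverse B = cfc (fun x : ℝ => x⁻¹) B :=
    kanto_inverse_eq_cfc hBsa hB0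
  -- key inequality for B
  have key2 : (m + M) • (1 : H →L[ℂ] H) - (m * M) • B ≤ k • Ring.inverse B := by
    rw [sub_le_iff_le_add]
    have e : k • Ring.inverse B + (m * M) • B
        = cfc (fun x : ℝ => k * x⁻¹ + (m * M) * x) B := by
      rw [cfc_add B (fun x : ℝ => k * x⁻¹) (fun x : ℝ => (m * M) * x)
          (continuousOn_const.mul hBcont) (continuousOn_const.mul continuousOn_id),
        cfc_const_mul _ _ _ hBcont, cfc_const_mul_id _ _ hBsa, hBinv_eq]
    rw [e, ← Algebra.algebraMap_eq_smul_one]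
    refine (algebraMap_le_cfc_iff _ _ _ ?_ hBsa).mpr fun x hx => ?_
    · exact (continuousOn_const.mul hBcont).add (continuousOn_const.mul continuousOn_id)
    · have hx0 : (0:ℝ) < x := (by positivity : (0:ℝ) < 1 / M).trans_le (hBspec x hx)
      have hxinv : x * x⁻¹ = 1 := mul_inv_cancel₀ hx0.ne'
      have hK : k * (4 * m * M) = (m + M) ^ 2 := div_mul_cancel₀ _ (by positivity)
      nlinarith [sq_nonneg (2 * m * M * x - (m + M)), hxinv, hK, hx0,
        mul_pos (mul_pos hm hM) hx0, mul_pos hm hM]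
  -- sum the per-operator inequalities
  have hsum1 : ∑ i, w i • A i ≤ (m + M) • (1 : H →L[ℂ] H) - (m * M) • B := by
    calc ∑ i, w i • A i
        ≤ ∑ i, w i • ((m + M) • (1 : H →L[ℂ] H) - (m * M) • Ring.inverse (A i)) :=
          Finset.sum_le_sum fun i _ => kanto_smul_mono (hw i) (key1 i)
      _ = (m + M) • (1 : H →L[ℂ] H) - (m * M) • B := by
          rw [hBeq]
          simp only [smul_sub]
          rw [Finset.sum_sub_distrib, ← Finset.sum_smul, hw1, one_smul, Finset.smul_sum]
          congr 1
          exact Finset.sum_congr rfl fun i _ => smul_comm _ _ _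
  have hmain : ∑ i, w i • A i ≤ k • Ring.inverse B := hsum1.trans key2
  -- transfer through Φ
  have hΦmono : ∀ {a b : H →L[ℂ] H}, a ≤ b → Φ a ≤ Φ b := by
    intro a b hab
    have h := hΦpos _ (sub_nonneg.mpr hab)
    rw [map_sub] at h
    exact sub_nonneg.mp h
  have hΦsmul : ∀ (r : ℝ) (a : H →L[ℂ] H), Φ (r • a) = r • Φ a := by
    intro r a
    rw [← algebraMap_smul ℂ r a, map_smul, algebraMap_smul]
  calc ∑ i, w i • Φ (A i) = Φ (∑ i, w i • A i) := by
        rw [map_sum]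
        exact Finset.sum_congr rfl fun i _ => (hΦsmul (w i) (A i)).symm
    _ ≤ Φ (k • Ring.inverse B) := hΦmono hmain
    _ = k • Φ (Ring.inverse B) := hΦsmul _ _
end

section
/- If A and B are positive invertible operators with 0 < m·I ≤ A ≤ M·I and A ≤ B, then A² ≤ ((M+m)²/(4Mm)) · B². -/
/-!
Since `(x - m) (M - x) ≥ 0` on the spectrum of `A`, the functional calculus gives
`A² ≤ (M + m) A - M m`. The right-hand side is linear, hence monotone, in `A`, so it is at most
`(M + m) B - M m`; and this is at most `K B²` with `K = (M + m)² / (4 M m)`, because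
`K x² - (M + m) x + M m = ((M + m) x - 2 M m)² / (4 M m)` is nonnegative for every real `x`.
-/

section Quadratic

variable {A : Type*} [TopologicalSpace A] [Ring A] [StarRing A] [Algebra ℝ A]
  [ContinuousFunctionalCalculus ℝ A IsSelfAdjoint] {a : A}

lemma cfc_quadratic (ha : IsSelfAdjoint a) (p q r : ℝ) :
    cfc (fun x : ℝ => p * x ^ 2 + q * x + r) a = p • a ^ 2 + q • a + r • (1 : A) := by
  rw [cfc_add .., cfc_add .., cfc_const_mul .., cfc_const_mul_id .., cfc_pow_id .., cfc_const ..,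
    Algebra.algebraMap_eq_smul_one]

variable [PartialOrder A] [StarOrderedRing A]

lemma quadratic_nonneg_of_spectrum (ha : IsSelfAdjoint a) {p q r : ℝ}
    (h : ∀ x ∈ spectrum ℝ a, 0 ≤ p * x ^ 2 + q * x + r) :
    0 ≤ p • a ^ 2 + q • a + r • (1 : A) :=
  cfc_quadratic ha p q r ▸ cfc_nonneg h

lemma sq_le_add_smul_sub_smul_one [NonnegSpectrumClass ℝ A] {m M : ℝ} (ha : IsSelfAdjoint a)
    (hm : m • (1 : A) ≤ a) (hM : a ≤ M • (1 : A)) :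
    a ^ 2 ≤ (M + m) • a - (M * m) • (1 : A) := by
  rw [← Algebra.algebraMap_eq_smul_one] at hm hM
  have hspec : ∀ x ∈ spectrum ℝ a, 0 ≤ -1 * x ^ 2 + (M + m) * x + -(M * m) := fun x hx => by
    have hmx := (algebraMap_le_iff_le_spectrum ha).mp hm x hx
    have hxM := (le_algebraMap_iff_spectrum_le ha).mp hM x hx
    nlinarith
  rw [← sub_nonneg]
  convert quadratic_nonneg_of_spectrum ha hspec using 1
  module

lemma add_smul_sub_smul_one_le_smul_sq {m M : ℝ} (ha : IsSelfAdjoint a) (hMm : 0 < M * m) :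
    (M + m) • a - (M * m) • (1 : A) ≤ ((M + m) ^ 2 / (4 * M * m)) • a ^ 2 := by
  have hspec : ∀ x ∈ spectrum ℝ a,
      0 ≤ (M + m) ^ 2 / (4 * M * m) * x ^ 2 + -(M + m) * x + M * m := fun x _ => by
    have hsq : (M + m) ^ 2 / (4 * M * m) * x ^ 2 + -(M + m) * x + M * m
        = ((M + m) * x - 2 * (M * m)) ^ 2 / (4 * (M * m)) := by
      field_simp [left_ne_zero_of_mul hMm.ne', right_ne_zero_of_mul hMm.ne']
      ring
    rw [hsq]
    positivity
  rw [← sub_nonneg]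
  convert quadratic_nonneg_of_spectrum ha hspec using 1
  module

end Quadratic

theorem sq_le_kantorovich_sq_general
    {H : Type*} [NormedAddCommGroup H] [InnerProductSpace ℂ H] [CompleteSpace H]
    (A B : H →L[ℂ] H) (hA : 0 ≤ A) (hB : 0 ≤ B)
    (m M : ℝ) (hm : 0 < m) (hmM : m ≤ M)
    (h1 : m • (1 : H →L[ℂ] H) ≤ A) (h2 : A ≤ M • (1 : H →L[ℂ] H))
    (hAB : A ≤ B) :
    A ^ 2 ≤ ((M + m) ^ 2 / (4 * M * m)) • B ^ 2 := by
  have hM : 0 < M := hm.trans_le hmM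
  calc A ^ 2 ≤ (M + m) • A - (M * m) • (1 : H →L[ℂ] H) :=
        sq_le_add_smul_sub_smul_one hA.isSelfAdjoint h1 h2
    _ ≤ (M + m) • B - (M * m) • (1 : H →L[ℂ] H) := by gcongr
    _ ≤ ((M + m) ^ 2 / (4 * M * m)) • B ^ 2 :=
        add_smul_sub_smul_one_le_smul_sq hB.isSelfAdjoint (by positivity)

/-- If `A` and `B` are positive invertible operators with `0 < m • 1 ≤ A ≤ M • 1`
and `A ≤ B`, then `A² ≤ ((M+m)²/(4Mm)) • B²`. -/
theorem sq_le_kantorovich_sq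
    {H : Type*} [NormedAddCommGroup H] [InnerProductSpace ℂ H] [CompleteSpace H]
    (A B : H →L[ℂ] H) (hA : 0 ≤ A) (hB : 0 ≤ B)
    (hAinv : Invertible A) (hBinv : Invertible B)
    (m M : ℝ) (hm : 0 < m) (hmM : m ≤ M)
    (h1 : m • (1 : H →L[ℂ] H) ≤ A) (h2 : A ≤ M • (1 : H →L[ℂ] H))
    (hAB : A ≤ B) :
    A ^ 2 ≤ ((M + m) ^ 2 / (4 * M * m)) • B ^ 2 :=
  sq_le_kantorovich_sq_general A B hA hB m M hm hmM h1 h2 hAB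
end

section
/- If A and B are positive semidefinite n×n matrices with A ≤ B, then for every p > 0 there exists a unitary matrix U such that A^p ≤ U B^p U*. -/
/-!
Weyl's monotonicity principle: if `A ≤ B` and both spectra are listed in decreasing order, then
`λₖ(A) ≤ λₖ(B)` for every `k`. Indeed the span of the first `k + 1` eigenvectors of `A` and the
span of the last `n - k` eigenvectors of `B` meet in a nonzero vector `x`, and
`λₖ(A) ‖x‖² ≤ ⟪x, A x⟫ ≤ ⟪x, B x⟫ ≤ λₖ(B) ‖x‖²`.
Writing `A = V diag(λ(A)) V*` and `B = W diag(λ(B)) W*`, the unitary `U = V W*` gives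
`U B^p U* = V diag(λ(B)^p) V*`, which dominates `A^p = V diag(λ(A)^p) V*` because `t ↦ t^p` is
monotone on `[0, ∞)`.
-/

open scoped ComplexOrder

open scoped InnerProductSpace MatrixOrder

namespace OrthonormalBasis

variable {ι 𝕜 E : Type*} [RCLike 𝕜] [NormedAddCommGroup E] [InnerProductSpace 𝕜 E] [Fintype ι]

lemma finrank_span_image (b : OrthonormalBasis ι 𝕜 E) (s : Finset ι) :
    Module.finrank 𝕜 (Submodule.span 𝕜 (b '' s)) = s.card := by
  rw [Set.image_eq_range]
  exact (finrank_span_eq_card (b.orthonormal.linearIndependent.comp _ Subtype.val_injective)).trans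
    (Fintype.card_coe s)

lemma inner_eq_zero_of_mem_span_image (b : OrthonormalBasis ι 𝕜 E) {s : Set ι} {i : ι}
    (hi : i ∉ s) {x : E} (hx : x ∈ Submodule.span 𝕜 (b '' s)) : ⟪b i, x⟫_𝕜 = 0 := by
  suffices Submodule.span 𝕜 (b '' s) ≤ (𝕜 ∙ b i)ᗮ from
    Submodule.mem_orthogonal_singleton_iff_inner_right.mp (this hx)
  rw [Submodule.span_le]
  rintro _ ⟨j, hj, rfl⟩
  exact Submodule.mem_orthogonal_singleton_iff_inner_right.mpr
    (b.orthonormal.2 fun hij => hi (hij ▸ hj))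

end OrthonormalBasis

namespace LinearMap.IsSymmetric

variable {𝕜 E : Type*} [RCLike 𝕜] [NormedAddCommGroup E] [InnerProductSpace 𝕜 E]
  [FiniteDimensional 𝕜 E] {n : ℕ} {S T : E →ₗ[𝕜] E}

lemma re_inner_apply_self_eq_sum (hT : T.IsSymmetric) (hn : Module.finrank 𝕜 E = n) (x : E) :
    RCLike.re ⟪x, T x⟫_𝕜 =
      ∑ i, hT.eigenvalues hn i * ‖⟪hT.eigenvectorBasis hn i, x⟫_𝕜‖ ^ 2 := by
  rw [← (hT.eigenvectorBasis hn).sum_inner_mul_inner x (T x), map_sum]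
  refine Finset.sum_congr rfl fun i _ => ?_
  rw [← hT, apply_eigenvectorBasis, inner_smul_left, RCLike.conj_ofReal, ← inner_conj_symm x,
    mul_left_comm, RCLike.conj_mul, RCLike.re_ofReal_mul]
  norm_cast

lemma mul_norm_sq_le_re_inner_of_mem_span (hT : T.IsSymmetric) (hn : Module.finrank 𝕜 E = n)
    {s : Set (Fin n)} {a : ℝ} (ha : ∀ i ∈ s, a ≤ hT.eigenvalues hn i) {x : E}
    (hx : x ∈ Submodule.span 𝕜 (hT.eigenvectorBasis hn '' s)) :
    a * ‖x‖ ^ 2 ≤ RCLike.re ⟪x, T x⟫_𝕜 := by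
  rw [hT.re_inner_apply_self_eq_sum hn, ← (hT.eigenvectorBasis hn).sum_sq_norm_inner_right x,
    Finset.mul_sum]
  refine Finset.sum_le_sum fun i _ => ?_
  by_cases hi : i ∈ s
  · exact mul_le_mul_of_nonneg_right (ha i hi) (by positivity)
  · simp [OrthonormalBasis.inner_eq_zero_of_mem_span_image _ hi hx]

lemma re_inner_le_mul_norm_sq_of_mem_span (hT : T.IsSymmetric) (hn : Module.finrank 𝕜 E = n)
    {s : Set (Fin n)} {b : ℝ} (hb : ∀ i ∈ s, hT.eigenvalues hn i ≤ b) {x : E}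
    (hx : x ∈ Submodule.span 𝕜 (hT.eigenvectorBasis hn '' s)) :
    RCLike.re ⟪x, T x⟫_𝕜 ≤ b * ‖x‖ ^ 2 := by
  rw [hT.re_inner_apply_self_eq_sum hn, ← (hT.eigenvectorBasis hn).sum_sq_norm_inner_right x,
    Finset.mul_sum]
  refine Finset.sum_le_sum fun i _ => ?_
  by_cases hi : i ∈ s
  · exact mul_le_mul_of_nonneg_right (hb i hi) (by positivity)
  · simp [OrthonormalBasis.inner_eq_zero_of_mem_span_image _ hi hx]

theorem eigenvalues_le_of_le (hS : S.IsSymmetric) (hT : T.IsSymmetric) (hST : S ≤ T)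
    (hn : Module.finrank 𝕜 E = n) (k : Fin n) : hS.eigenvalues hn k ≤ hT.eigenvalues hn k := by
  set V := Submodule.span 𝕜 (hS.eigenvectorBasis hn '' ↑(Finset.Iic k))
  set W := Submodule.span 𝕜 (hT.eigenvectorBasis hn '' ↑(Finset.Ici k))
  have hVW : ¬ Disjoint V W := fun h =>
    (Submodule.finrank_add_finrank_le_of_disjoint h).not_gt <| by
      rw [OrthonormalBasis.finrank_span_image, OrthonormalBasis.finrank_span_image,
        Fin.card_Iic, Fin.card_Ici, hn]
      omega
  obtain ⟨x, hx, hx0⟩ := Submodule.exists_mem_ne_zero_of_ne_bot (disjoint_iff.not.mp hVW)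
  rw [Submodule.mem_inf] at hx
  have hS_lower := hS.mul_norm_sq_le_re_inner_of_mem_span hn
    (fun i hi => hS.eigenvalues_antitone hn (Finset.mem_Iic.mp hi)) hx.1
  have hT_upper := hT.re_inner_le_mul_norm_sq_of_mem_span hn
    (fun i hi => hT.eigenvalues_antitone hn (Finset.mem_Ici.mp hi)) hx.2
  have hST_inner : RCLike.re ⟪x, S x⟫_𝕜 ≤ RCLike.re ⟪x, T x⟫_𝕜 := by
    have := ((LinearMap.le_def S T).mp hST).re_inner_nonneg_right x
    rwa [LinearMap.sub_apply, inner_sub_right, map_sub, sub_nonneg] at this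
  exact le_of_mul_le_mul_right (hS_lower.trans (hST_inner.trans hT_upper)) (by positivity)

end LinearMap.IsSymmetric

namespace Matrix.IsHermitian

variable {n 𝕜 : Type*} [Fintype n] [DecidableEq n] [RCLike 𝕜] {A B : Matrix n n 𝕜}

-- `Matrix.IsHermitian.eigenvalues` lists the decreasingly sorted `eigenvalues₀` through an
-- equivalence that depends only on `n`, so `i` picks the eigenvalue of the same rank in both.
theorem eigenvalues_le_of_le (hA : A.IsHermitian) (hB : B.IsHermitian) (hAB : A ≤ B) (i : n) :
    hA.eigenvalues i ≤ hB.eigenvalues i :=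
  LinearMap.IsSymmetric.eigenvalues_le_of_le _ _
    (by rwa [LinearMap.le_def, ← map_sub, Matrix.isPositive_toEuclideanLin_iff]) _ _

theorem exists_unitary_cfc_le_of_forall_eigenvalues_le (hA : A.IsHermitian) (hB : B.IsHermitian)
    (f : ℝ → ℝ) (hf : ∀ i, f (hA.eigenvalues i) ≤ f (hB.eigenvalues i)) :
    ∃ U ∈ unitaryGroup n 𝕜, hA.cfc f ≤ U * hB.cfc f * star U := by
  set U := hA.eigenvectorUnitary * star hB.eigenvectorUnitary
  refine ⟨U, U.2, ?_⟩
  have hconj : (U : Matrix n n 𝕜) * hB.cfc f * star (U : Matrix n n 𝕜) =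
      Unitary.conjStarAlgAut 𝕜 _ hA.eigenvectorUnitary
        (diagonal (RCLike.ofReal ∘ f ∘ hB.eigenvalues)) := by
    rw [← Unitary.conjStarAlgAut_apply (S := 𝕜), IsHermitian.cfc,
      ← Unitary.conjStarAlgAut_mul_apply, mul_assoc, Unitary.star_mul_self, mul_one]
  rw [Matrix.le_iff, hconj, IsHermitian.cfc, ← map_sub, diagonal_sub, Unitary.conjStarAlgAut_apply]
  refine (posSemidef_diagonal_iff.mpr fun i => ?_).mul_mul_conjTranspose_same _
  simp only [Function.comp_apply]
  rw [← RCLike.ofReal_sub, RCLike.ofReal_nonneg, sub_nonneg]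
  exact hf i

end Matrix.IsHermitian

/-- If `A ≤ B` (Loewner order) are positive semidefinite matrices, then for every `p > 0`
there exists a unitary `U` with `A^p ≤ U B^p U*`. -/
theorem exists_unitary_rpow_le {n : ℕ} (A B : Matrix (Fin n) (Fin n) ℂ)
    (hA : A.PosSemidef) (hB : B.PosSemidef) (hAB : (B - A).PosSemidef)
    (p : ℝ) (hp : 0 < p) :
    ∃ U : Matrix (Fin n) (Fin n) ℂ, U ∈ Matrix.unitaryGroup (Fin n) ℂ ∧
      (U * Matrix.rpow B p * star U - Matrix.rpow A p).PosSemidef := by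
  simp only [Matrix.rpow, dif_pos hA.1, dif_pos hB.1]
  exact hA.1.exists_unitary_cfc_le_of_forall_eigenvalues_le hB.1 _ fun i =>
    Real.rpow_le_rpow (hA.eigenvalues_nonneg i) (hA.1.eigenvalues_le_of_le hB.1 hAB i) hp.le
end
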